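/- For each k > 2, the point (1/k, 1/k²) is a singular point of the curve {b_k = 0}: both partial derivatives ∂b_k/∂x and ∂b_k/∂y vanish at (1/k, 1/k²), and b_k(1/k, 1/k²) = 0. -/

import Mathlib

/-- The defining polynomial `b_k` of the `k`-th boundary curve of planar
Vandermonde cells. -/
noncomputable def bCurve (k x y : ℝ) : ℝ :=
  x ^ 3 * (k ^ 3 - 4 * k ^ 2 + 4 * k) + y ^ 2 * (-k ^ 3 + k ^ 2) + x * y * (6 * k ^ 2 - 6 * k)
    + x ^ 2 * (-3 * k ^ 2 + 3 * k - 3) + 3 * k * x + y * (-4 * k + 4) - 1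

theorem hasDerivAt_bCurve_fst (k x y : ℝ) :
    HasDerivAt (fun x => bCurve k x y)
      (3 * x ^ 2 * (k ^ 3 - 4 * k ^ 2 + 4 * k) + y * (6 * k ^ 2 - 6 * k)
        + 2 * x * (-3 * k ^ 2 + 3 * k - 3) + 3 * k) x := by
  unfold bCurve
  refine HasDerivAt.congr_deriv (by
    apply_rules [hasDerivAt_const, HasDerivAt.add, HasDerivAt.sub, HasDerivAt.mul_const,
      HasDerivAt.const_mul, hasDerivAt_pow, hasDerivAt_id']) ?_
  ring

theorem hasDerivAt_bCurve_snd (k x y : ℝ) :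
    HasDerivAt (fun y => bCurve k x y)
      (2 * y * (-k ^ 3 + k ^ 2) + x * (6 * k ^ 2 - 6 * k) + (-4 * k + 4)) y := by
  unfold bCurve
  refine HasDerivAt.congr_deriv (by
    apply_rules [hasDerivAt_const, HasDerivAt.add, HasDerivAt.sub, HasDerivAt.mul_const,
      HasDerivAt.const_mul, hasDerivAt_pow, hasDerivAt_id']) ?_
  ring

theorem bCurve_one_div_one_div_sq {k : ℝ} (hk : k ≠ 0) : bCurve k (1 / k) (1 / k ^ 2) = 0 := by
  unfold bCurve
  field_simp
  ring

/-- For `k > 2`, the point `(1/k, 1/k²)` is a singular point of `{b_k = 0}`: the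
polynomial and both partial derivatives vanish there. -/
theorem bCurve_singular_at_cusp (k : ℕ) (hk : 2 < k) :
    bCurve (k : ℝ) (1 / (k : ℝ)) (1 / (k : ℝ) ^ 2) = 0 ∧
    deriv (fun x : ℝ => bCurve (k : ℝ) x (1 / (k : ℝ) ^ 2)) (1 / (k : ℝ)) = 0 ∧
    deriv (fun y : ℝ => bCurve (k : ℝ) (1 / (k : ℝ)) y) (1 / (k : ℝ) ^ 2) = 0 := by
  have hk0 : (k : ℝ) ≠ 0 := by positivity
  refine ⟨bCurve_one_div_one_div_sq hk0, (hasDerivAt_bCurve_fst _ _ _).deriv.trans ?_,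
    (hasDerivAt_bCurve_snd _ _ _).deriv.trans ?_⟩
  all_goals
    field_simp
    ring
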